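/- For every elasticity tensor C there exist unique real numbers λ, μ, unique symmetric traceless real 3×3 matrices a, b, and a unique harmonic tensor D ∈ H⁴ such that C i j k l = λ δᵢⱼ δₖₗ + μ (δᵢₖ δⱼₗ + δᵢₗ δⱼₖ) + δᵢⱼ a k l + δₖₗ a i j + δᵢₖ b j l + δⱼₗ b i k + δᵢₗ b j k + δⱼₖ b i l + D i j k l for all indices. Moreover λ = (2 tr d(C) − tr v(C))/15, μ = (3 tr v(C) − tr d(C))/30, a = (5 dev d(C) − 4 dev v(C))/7, and b = (3 dev v(C) − 2 dev d(C))/7. -/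

import Mathlib

open Matrix BigOperators

abbrev Mat3 := Matrix (Fin 3) (Fin 3) ℝ
abbrev T4 := Fin 3 → Fin 3 → Fin 3 → Fin 3 → ℝ

/-- Kronecker delta on `Fin 3`. -/
def kd (i j : Fin 3) : ℝ := if i = j then 1 else 0

/-- An elasticity tensor: minor and major index symmetries. -/
def IsEla (C : T4) : Prop :=
  ∀ i j k l, C i j k l = C j i k l ∧ C i j k l = C i j l k ∧ C i j k l = C k l i j

/-- A harmonic fourth-order tensor: totally symmetric and traceless. -/
def IsHarm (D : T4) : Prop :=
  (∀ i j k l, D i j k l = D j i k l) ∧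
  (∀ i j k l, D i j k l = D i k j l) ∧
  (∀ i j k l, D i j k l = D i j l k) ∧
  (∀ i j, ∑ k, D k k i j = 0)

/-- The dilatation tensor `d(C) i j = ∑ₖ C k k i j`. -/
noncomputable def dil (C : T4) : Mat3 := Matrix.of fun i j => ∑ k, C k k i j

/-- The Voigt tensor `v(C) i j = ∑ₖ C k i k j`. -/
noncomputable def voigt (C : T4) : Mat3 := Matrix.of fun i j => ∑ k, C k i k j

/-- The deviatoric (traceless) part of a 3×3 matrix. -/
noncomputable def dev (m : Mat3) : Mat3 := m - (m.trace / 3) • 1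

/-- The harmonic decomposition equation `C = (λ, μ, a, b, D)`. -/
def HarmDecomp (C : T4) (lam mu : ℝ) (a b : Mat3) (D : T4) : Prop :=
  ∀ i j k l, C i j k l =
    lam * kd i j * kd k l + mu * (kd i k * kd j l + kd i l * kd j k) +
    kd i j * a k l + kd k l * a i j +
    kd i k * b j l + kd j l * b i k + kd i l * b j k + kd j k * b i l +
    D i j k l

/-!
Contracting a decomposition `C = (λ, μ, a, b, D)` kills `D`, because a harmonic tensor is
traceless, and gives `d(C) = (3λ + 2μ) I + 3a + 4b` and `v(C) = (λ + 4μ) I + 2a + 5b`.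
Separating traces and deviators, this linear system is invertible, which yields the formulas
and hence uniqueness. For existence, define `λ, μ, a, b` by the formulas and `D` as the
remainder: it has the elasticity symmetries and vanishing dilatation and Voigt tensors, and in
dimension 3 these force total symmetry.
-/

theorem Fin.sum_univ_three_of_ne {M : Type*} [AddCommMonoid M] (f : Fin 3 → M) {p q r : Fin 3}
    (hpq : p ≠ q) (hpr : p ≠ r) (hqr : q ≠ r) : ∑ n, f n = f p + f q + f r := by
  fin_cases p <;> fin_cases q <;> fin_cases r <;> simp_all [Fin.sum_univ_three] <;> abel

theorem kd_comm (i j : Fin 3) : kd i j = kd j i := by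
  simp only [kd, eq_comm]

def lowOrderTensor (lam mu : ℝ) (a b : Mat3) : T4 := fun i j k l =>
  lam * kd i j * kd k l + mu * (kd i k * kd j l + kd i l * kd j k) +
    kd i j * a k l + kd k l * a i j +
    kd i k * b j l + kd j l * b i k + kd i l * b j k + kd j k * b i l

theorem harmDecomp_iff {C : T4} {lam mu : ℝ} {a b : Mat3} {D : T4} :
    HarmDecomp C lam mu a b D ↔ D = C - lowOrderTensor lam mu a b := by
  simp only [HarmDecomp, funext_iff, Pi.sub_apply, lowOrderTensor]
  exact forall₄_congr fun i j k l => by constructor <;> intro h <;> linarith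

theorem dil_sub (A B : T4) : dil (A - B) = dil A - dil B := by
  ext i j
  simp [dil, Finset.sum_sub_distrib]

theorem voigt_sub (A B : T4) : voigt (A - B) = voigt A - voigt B := by
  ext i j
  simp [voigt, Finset.sum_sub_distrib]

theorem dil_lowOrderTensor (lam mu : ℝ) (a b : Mat3) :
    dil (lowOrderTensor lam mu a b) =
      (3 * lam + 2 * mu + a.trace) • 1 + (3 : ℝ) • a + (2 : ℝ) • (b + bᵀ) := by
  ext i j
  fin_cases i <;> fin_cases j <;>
    simp [dil, lowOrderTensor, Fin.sum_univ_three, kd, trace] <;> ring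

theorem voigt_lowOrderTensor (lam mu : ℝ) (a b : Mat3) :
    voigt (lowOrderTensor lam mu a b) =
      (lam + 4 * mu + b.trace) • 1 + (a + aᵀ) + (5 : ℝ) • b := by
  ext i j
  fin_cases i <;> fin_cases j <;>
    simp [voigt, lowOrderTensor, Fin.sum_univ_three, kd, trace] <;> ring

theorem trace_dev (m : Mat3) : (dev m).trace = 0 := by
  simp [dev, trace_sub, trace_smul]

theorem Matrix.IsSymm.dev {m : Mat3} (h : m.IsSymm) : (dev m).IsSymm :=
  h.sub (isSymm_one.smul _)

theorem isEla_lowOrderTensor (lam mu : ℝ) {a b : Mat3} (ha : a.IsSymm) (hb : b.IsSymm) :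
    IsEla (lowOrderTensor lam mu a b) := by
  intro i j k l
  simp only [lowOrderTensor]
  refine ⟨?_, ?_, ?_⟩
  · rw [kd_comm j i, ha.apply i j]; ring
  · rw [kd_comm l k, ha.apply k l]; ring
  · rw [kd_comm k i, kd_comm l j, kd_comm k j, kd_comm l i, hb.apply j l, hb.apply i k,
      hb.apply i l, hb.apply j k]
    ring

namespace IsEla

variable {C : T4} (hC : IsEla C)
include hC

theorem isSymm_dil : (dil C).IsSymm := by
  ext i j
  simp only [dil, transpose_apply, of_apply, (hC _ _ i j).2.1]

theorem isSymm_voigt : (voigt C).IsSymm := by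
  ext i j
  simp only [voigt, transpose_apply, of_apply]
  exact Finset.sum_congr rfl fun k _ => (hC k j k i).2.2

theorem sub {B : T4} (hB : IsEla B) : IsEla (C - B) := fun i j k l =>
  ⟨congrArg₂ (· - ·) (hC i j k l).1 (hB i j k l).1,
    congrArg₂ (· - ·) (hC i j k l).2.1 (hB i j k l).2.1,
    congrArg₂ (· - ·) (hC i j k l).2.2 (hB i j k l).2.2⟩

theorem isHarm_of_dil_eq_zero_of_voigt_eq_zero (hd : dil C = 0) (hv : voigt C = 0) :
    IsHarm C := by
  have hdil (p q : Fin 3) : ∑ m, C m m p q = 0 := by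
    simpa [dil] using congrFun (congrFun hd p) q
  have hw (p q : Fin 3) : ∑ m, (C m m p q - C m p m q) = 0 := by
    have hvoigt : ∑ m, C m p m q = 0 := by simpa [voigt] using congrFun (congrFun hv p) q
    rw [Finset.sum_sub_distrib, hdil, hvoigt, sub_zero]
  have hw_right (p q : Fin 3) : C q q p q - C q p q q = 0 := by
    rw [(hC q q p q).2.1, (hC q p q q).2.2, sub_self]
  have hw_comm (m p : Fin 3) : C m m p p - C m p m p = C p p m m - C p m p m := by
    rw [(hC m m p p).2.2, (hC m p m p).1, (hC p m m p).2.1]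
  -- The summand of `hw p q` vanishes at `m = p` and `m = q`. For `p ≠ q` only the third index
  -- is left; for `p = q` the three sums `hw p p`, `hw m m`, `hw r r` are, by `hw_comm`, a
  -- nonsingular system in three unknowns.
  have hpair (m p q : Fin 3) : C m m p q = C m p m q := by
    rcases eq_or_ne m p with rfl | hmp
    · rfl
    rcases eq_or_ne m q with rfl | hmq
    · exact sub_eq_zero.1 (hw_right p m)
    rcases eq_or_ne p q with rfl | hpq
    · obtain ⟨r, hrm, hrp⟩ : ∃ r, r ≠ m ∧ r ≠ p := by revert m p; decide
      have hp := hw p p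
      have hm := hw m m
      have hr := hw r r
      rw [Fin.sum_univ_three_of_ne _ hmp hrm.symm hrp.symm] at hp hm hr
      linarith [hw_comm m p, hw_comm r p, hw_comm r m]
    · have h := hw p q
      rw [Fin.sum_univ_three_of_ne _ hpq hmp.symm hmq.symm] at h
      linarith [hw_right p q]
  have hrev (i j k l : Fin 3) : C i j k l = C l k j i := by
    rw [(hC i j k l).2.2, (hC k l i j).1, (hC l k i j).2.1]
  have hswap (i j k l : Fin 3) (h : i = j ∨ i = k) : C i j k l = C i k j l := by
    rcases h with rfl | rfl
    · exact hpair i k l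
    · exact (hpair i j l).symm
  refine ⟨fun i j k l => (hC i j k l).1, fun i j k l => ?_,
    fun i j k l => (hC i j k l).2.1, hdil⟩
  -- Four indices in `Fin 3` cannot be pairwise distinct.
  obtain h | h | h | h | h | h : i = j ∨ i = k ∨ i = l ∨ j = k ∨ j = l ∨ k = l := by omega
  · exact hswap i j k l (Or.inl h)
  · exact hswap i j k l (Or.inr h)
  · rw [h, hrev l j k l]
  · rw [h]
  · rw [hrev i j k l, hrev i k j l]
    exact hswap l k j i (Or.inr h.symm)
  · rw [hrev i j k l, hrev i k j l]
    exact hswap l k j i (Or.inl h.symm)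

end IsEla

theorem IsHarm.dil_eq_zero {D : T4} (hD : IsHarm D) : dil D = 0 := by
  ext i j
  simp [dil, hD.2.2.2]

theorem IsHarm.voigt_eq_zero {D : T4} (hD : IsHarm D) : voigt D = 0 := by
  ext i j
  rw [voigt, of_apply, Matrix.zero_apply, ← hD.2.2.2 i j]
  exact Finset.sum_congr rfl fun k _ => hD.2.1 k i k j

noncomputable def harmLam (C : T4) : ℝ := (2 * (dil C).trace - (voigt C).trace) / 15

noncomputable def harmMu (C : T4) : ℝ := (3 * (voigt C).trace - (dil C).trace) / 30

noncomputable def harmA (C : T4) : Mat3 :=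
  (5 / 7 : ℝ) • dev (dil C) - (4 / 7 : ℝ) • dev (voigt C)

noncomputable def harmB (C : T4) : Mat3 :=
  (3 / 7 : ℝ) • dev (voigt C) - (2 / 7 : ℝ) • dev (dil C)

theorem trace_harmA (C : T4) : (harmA C).trace = 0 := by
  simp [harmA, trace_dev]

theorem trace_harmB (C : T4) : (harmB C).trace = 0 := by
  simp [harmB, trace_dev]

theorem eq_harm_of_harmDecomp {C D : T4} {lam mu : ℝ} {a b : Mat3} (ha : a.IsSymm)
    (ha0 : a.trace = 0) (hb : b.IsSymm) (hb0 : b.trace = 0) (hD : IsHarm D)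
    (h : HarmDecomp C lam mu a b D) :
    lam = harmLam C ∧ mu = harmMu C ∧ a = harmA C ∧ b = harmB C := by
  rw [harmDecomp_iff] at h
  have hdil : dil C = (3 * lam + 2 * mu) • 1 + (3 : ℝ) • a + (4 : ℝ) • b := by
    have h0 := hD.dil_eq_zero
    rw [h, dil_sub, sub_eq_zero, dil_lowOrderTensor, ha0, hb] at h0
    rw [h0]; module
  have hvoigt : voigt C = (lam + 4 * mu) • 1 + (2 : ℝ) • a + (5 : ℝ) • b := by
    have h0 := hD.voigt_eq_zero
    rw [h, voigt_sub, sub_eq_zero, voigt_lowOrderTensor, hb0, ha] at h0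
    rw [h0]; module
  have htd : (dil C).trace = 9 * lam + 6 * mu := by
    simp [hdil, ha0, hb0]; ring
  have htv : (voigt C).trace = 3 * lam + 12 * mu := by
    simp [hvoigt, ha0, hb0]; ring
  have hdd : dev (dil C) = (3 : ℝ) • a + (4 : ℝ) • b := by
    rw [dev, htd, hdil]; module
  have hdv : dev (voigt C) = (2 : ℝ) • a + (5 : ℝ) • b := by
    rw [dev, htv, hvoigt]; module
  refine ⟨?_, ?_, ?_, ?_⟩
  · rw [harmLam, htd, htv]; ring
  · rw [harmMu, htd, htv]; ring
  · rw [harmA, hdd, hdv]; module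
  · rw [harmB, hdd, hdv]; module

namespace IsEla

variable {C : T4} (hC : IsEla C)
include hC

theorem isSymm_harmA : (harmA C).IsSymm :=
  (hC.isSymm_dil.dev.smul _).sub (hC.isSymm_voigt.dev.smul _)

theorem isSymm_harmB : (harmB C).IsSymm :=
  (hC.isSymm_voigt.dev.smul _).sub (hC.isSymm_dil.dev.smul _)

theorem isHarm_sub_lowOrderTensor :
    IsHarm (C - lowOrderTensor (harmLam C) (harmMu C) (harmA C) (harmB C)) := by
  refine (hC.sub (isEla_lowOrderTensor _ _ hC.isSymm_harmA hC.isSymm_harmB)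
    ).isHarm_of_dil_eq_zero_of_voigt_eq_zero ?_ ?_
  · rw [dil_sub, sub_eq_zero, dil_lowOrderTensor, trace_harmA, hC.isSymm_harmB, harmLam, harmMu,
      harmA, harmB, dev, dev]
    module
  · rw [voigt_sub, sub_eq_zero, voigt_lowOrderTensor, trace_harmB, hC.isSymm_harmA, harmLam,
      harmMu, harmA, harmB, dev, dev]
    module

end IsEla

/-- every elasticity tensor admits a unique harmonic decomposition
`C = (λ, μ, a, b, D)` with `a`, `b` symmetric traceless and `D` harmonic; moreover the
components are given by explicit traces and deviators of the dilatation and Voigt tensors. -/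
theorem harmonic_decomposition_exists_unique (C : T4) (hC : IsEla C) :
    ∃ (lam mu : ℝ) (a b : Mat3) (D : T4),
      (aᵀ = a ∧ a.trace = 0 ∧ bᵀ = b ∧ b.trace = 0 ∧ IsHarm D ∧
        HarmDecomp C lam mu a b D) ∧
      (lam = (2 * (dil C).trace - (voigt C).trace) / 15 ∧
       mu = (3 * (voigt C).trace - (dil C).trace) / 30 ∧
       a = (5 / 7 : ℝ) • dev (dil C) - (4 / 7 : ℝ) • dev (voigt C) ∧
       b = (3 / 7 : ℝ) • dev (voigt C) - (2 / 7 : ℝ) • dev (dil C)) ∧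
      (∀ (lam' mu' : ℝ) (a' b' : Mat3) (D' : T4),
        (a'ᵀ = a' ∧ a'.trace = 0 ∧ b'ᵀ = b' ∧ b'.trace = 0 ∧ IsHarm D' ∧
          HarmDecomp C lam' mu' a' b' D') →
        lam' = lam ∧ mu' = mu ∧ a' = a ∧ b' = b ∧ D' = D) := by
  refine ⟨harmLam C, harmMu C, harmA C, harmB C,
    C - lowOrderTensor (harmLam C) (harmMu C) (harmA C) (harmB C),
    ⟨hC.isSymm_harmA, trace_harmA C, hC.isSymm_harmB, trace_harmB C,
      hC.isHarm_sub_lowOrderTensor, harmDecomp_iff.2 rfl⟩, ⟨rfl, rfl, rfl, rfl⟩, ?_⟩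
  rintro lam mu a b D ⟨ha, ha0, hb, hb0, hD, h⟩
  obtain ⟨rfl, rfl, rfl, rfl⟩ := eq_harm_of_harmDecomp ha ha0 hb hb0 hD h
  exact ⟨rfl, rfl, rfl, rfl, harmDecomp_iff.1 h⟩
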